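/- arXiv:1106.3981 — 3 statements merged into one kernel-verified Lean document; each statement's English description precedes it below -/
import Mathlib

section
/- Fix an integer j ≥ 0 and let J and H be subgroups of X_j both containing X_j ∩ Y₀. Then J ≤ H if and only if N(J) ≤ N(H), and J is a normal subgroup of H if and only if N(J) is a normal subgroup of N(H). -/
/-!
A subgroup `K` with `X_j ∩ Y₀ ≤ K ≤ X_j` is determined by its image `K⁺`: it equals `X_j ∩ snd⁻¹(K⁺)`,
and since `B` projects onto `S` in the first coordinate, `N(K)⁻ = K⁺`, so `K = X_j ∩ P(N(K))`.
Both `N` and `U ↦ X_j ∩ P(U)` are composites of images, preimages and intersections with a fixed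
subgroup, and each of these preserves inclusions and the relation `H ≤ normalizer J`. Hence
inclusion and relative normality pass from `J, H` to `N(J), N(H)` and back.
-/

open Pointwise

namespace GroupCodes

variable {S : Type*} [Group S]

/-- The subgroups `Xₙ` of the branch group `B ≤ S × S`: `X₀ = {b ∈ B : b⁻ = 1}` and
`X_{n+1} = {b ∈ B : b⁻ ∈ Xₙ⁺}` (here `b⁻ = b.1`, `b⁺ = b.2`, `U⁺ = snd '' U`). -/
def Xnat (B : Subgroup (S × S)) : ℕ → Subgroup (S × S)
  | 0 => B ⊓ (MonoidHom.fst S S).ker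
  | n + 1 => B ⊓ (Subgroup.map (MonoidHom.snd S S) (Xnat B n)).comap (MonoidHom.fst S S)

/-- The subgroups `Yₙ` of the branch group `B ≤ S × S`: `Y₀ = {b ∈ B : b⁺ = 1}` and
`Y_{n+1} = {b ∈ B : b⁺ ∈ Yₙ⁻}`. -/
def Ynat (B : Subgroup (S × S)) : ℕ → Subgroup (S × S)
  | 0 => B ⊓ (MonoidHom.snd S S).ker
  | n + 1 => B ⊓ (Subgroup.map (MonoidHom.fst S S) (Ynat B n)).comap (MonoidHom.snd S S)

/-- `X i` for an integer index `i`, trivial for `i < 0`. -/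
def X (B : Subgroup (S × S)) (i : ℤ) : Subgroup (S × S) :=
  if i < 0 then ⊥ else Xnat B i.toNat

/-- `Y i` for an integer index `i`, trivial for `i < 0`. -/
def Y (B : Subgroup (S × S)) (i : ℤ) : Subgroup (S × S) :=
  if i < 0 then ⊥ else Ynat B i.toNat

/-- The next-branch set `N(U) = {b ∈ B : b⁻ ∈ U⁺}`. -/
def N (B U : Subgroup (S × S)) : Subgroup (S × S) :=
  B ⊓ (Subgroup.map (MonoidHom.snd S S) U).comap (MonoidHom.fst S S)

/-- The previous-branch set `P(U) = {b ∈ B : b⁺ ∈ U⁻}`. -/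
def P (B U : Subgroup (S × S)) : Subgroup (S × S) :=
  B ⊓ (Subgroup.map (MonoidHom.fst S S) U).comap (MonoidHom.snd S S)

/-- `IsQuotIso J H J' H'` says that `J` (viewed inside `H`) is normal in `H`, `J'` is normal
in `H'`, and there is a group isomorphism `H / J ≅ H' / J'`. -/
def IsQuotIso {G₁ G₂ : Type*} [Group G₁] [Group G₂]
    (J H : Subgroup G₁) (J' H' : Subgroup G₂) : Prop :=
  (J.subgroupOf H).Normal ∧ (J'.subgroupOf H').Normal ∧
    ∀ [(J.subgroupOf H).Normal] [(J'.subgroupOf H').Normal],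
      Nonempty ((H ⧸ J.subgroupOf H) ≃* (H' ⧸ J'.subgroupOf H'))

/-- `T` is a right transversal of `J` inside `H`: `T ⊆ H` and `T` meets every right coset
of `J` contained in `H` in exactly one element. -/
def IsRightTransversalIn {G : Type*} [Group G] (J H : Subgroup G) (T : Set G) : Prop :=
  T ⊆ (H : Set G) ∧ ∀ h ∈ H, ∃! t, t ∈ T ∧ t * h⁻¹ ∈ J

/-- The group of trellis path segments `(b₀, …, bₙ)` with `b_j ∈ F j` and matching states
`b_j⁺ = b_{j+1}⁻`; a subgroup of the direct product `(S × S)^{n+1}`. -/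
def chainSubgroup (n : ℕ) (F : ℤ → Subgroup (S × S)) : Subgroup (Fin (n + 1) → S × S) where
  carrier := {b | (∀ i : Fin (n + 1), b i ∈ F (i : ℤ)) ∧
    ∀ i : Fin n, (b i.castSucc).2 = (b i.succ).1}
  one_mem' := ⟨fun _ => one_mem _, fun _ => rfl⟩
  mul_mem' := by
    rintro a b ⟨ha1, ha2⟩ ⟨hb1, hb2⟩
    refine ⟨fun i => mul_mem (ha1 i) (hb1 i), fun i => ?_⟩
    simp only [Pi.mul_apply, Prod.snd_mul, Prod.fst_mul, ha2 i, hb2 i]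
  inv_mem' := by
    rintro a ⟨ha1, ha2⟩
    refine ⟨fun i => inv_mem (ha1 i), fun i => ?_⟩
    simp only [Pi.inv_apply, Prod.snd_inv, Prod.fst_inv, ha2 i]

/-- `U ⨝ N(U)`: the group of trellis path segments `(b, b')` of length two with `b ∈ U`,
`b' ∈ N(U)` and `b⁺ = b'⁻`; a subgroup of the direct product `(S × S) × (S × S)`. -/
def JoinN (B U : Subgroup (S × S)) : Subgroup ((S × S) × (S × S)) where
  carrier := {p | p.1 ∈ U ∧ p.2 ∈ N B U ∧ p.1.2 = p.2.1}
  one_mem' := ⟨one_mem _, one_mem _, rfl⟩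
  mul_mem' := by
    rintro a b ⟨ha1, ha2, ha3⟩ ⟨hb1, hb2, hb3⟩
    exact ⟨mul_mem ha1 hb1, mul_mem ha2 hb2, by
      simp only [Prod.fst_mul, Prod.snd_mul, ha3, hb3]⟩
  inv_mem' := by
    rintro a ⟨ha1, ha2, ha3⟩
    exact ⟨inv_mem ha1, inv_mem ha2, by
      simp only [Prod.fst_inv, Prod.snd_inv, ha3]⟩

end GroupCodes

namespace Subgroup

variable {G G' : Type*} [Group G] [Group G']

theorem map_inf_comap_of_le_map (f : G →* G') {A : Subgroup G} {M : Subgroup G'}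
    (hM : M ≤ A.map f) : (A ⊓ M.comap f).map f = M := by
  refine le_antisymm ((map_mono inf_le_right).trans (map_comap_le f M)) fun y hy => ?_
  obtain ⟨x, hxA, rfl⟩ := mem_map.mp (hM hy)
  exact mem_map_of_mem f ⟨hxA, hy⟩

theorem inf_comap_map_eq_of_inf_ker_le (f : G →* G') {A K : Subgroup G} (hKA : K ≤ A)
    (hker : A ⊓ f.ker ≤ K) : A ⊓ (K.map f).comap f = K := by
  refine le_antisymm ?_ (le_inf hKA (le_comap_map f K))
  rintro x ⟨hxA, hx⟩
  obtain ⟨u, huK, hux⟩ := mem_map.mp hx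
  have hxu : x * u⁻¹ ∈ K := hker (mem_inf.mpr ⟨mul_mem hxA (inv_mem (hKA huK)), by simp [hux]⟩)
  simpa using mul_mem hxu huK

theorem le_and_normal_subgroupOf_iff {J H : Subgroup G} :
    (J ≤ H ∧ (J.subgroupOf H).Normal) ↔ (J ≤ H ∧ H ≤ normalizer (J : Set G)) :=
  and_congr_right normal_subgroupOf_iff_le_normalizer

theorem map_le_normalizer_map (f : G →* G') {J H : Subgroup G}
    (h : H ≤ normalizer (J : Set G)) : H.map f ≤ normalizer (J.map f : Set G') :=
  (map_mono h).trans (le_normalizer_map f)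

theorem comap_le_normalizer_comap (f : G' →* G) {J H : Subgroup G}
    (h : H ≤ normalizer (J : Set G)) : H.comap f ≤ normalizer (J.comap f : Set G') :=
  (comap_mono h).trans (le_normalizer_comap f)

theorem inf_le_normalizer_inf (A : Subgroup G) {J H : Subgroup G}
    (h : H ≤ normalizer (J : Set G)) : A ⊓ H ≤ normalizer ((A ⊓ J : Subgroup G) : Set G) :=
  (inf_le_inf le_normalizer h).trans inf_normalizer_le_normalizer_inf

end Subgroup

namespace GroupCodes

variable {S : Type*} [Group S]

section

open Subgroup

variable (B : Subgroup (S × S))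

theorem X_le (j : ℤ) : X B j ≤ B := by
  unfold X
  split_ifs
  · exact bot_le
  · cases j.toNat <;> exact inf_le_left

theorem X_inf_Y_zero (j : ℤ) : X B j ⊓ Y B 0 = X B j ⊓ (MonoidHom.snd S S).ker := by
  rw [Y, if_neg (lt_irrefl 0), Int.toNat_zero, Ynat, ← inf_assoc, inf_eq_left.mpr (X_le B j)]

theorem N_mono : Monotone (N B) := fun _ _ h =>
  inf_le_inf_left B (comap_mono (map_mono h))

theorem P_mono : Monotone (P B) := fun _ _ h =>
  inf_le_inf_left B (comap_mono (map_mono h))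

theorem N_le_normalizer_N {J H : Subgroup (S × S)} (h : H ≤ normalizer (J : Set (S × S))) :
    N B H ≤ normalizer (N B J : Set (S × S)) :=
  inf_le_normalizer_inf B <| comap_le_normalizer_comap _ (map_le_normalizer_map _ h)

theorem P_le_normalizer_P {J H : Subgroup (S × S)} (h : H ≤ normalizer (J : Set (S × S))) :
    P B H ≤ normalizer (P B J : Set (S × S)) :=
  inf_le_normalizer_inf B <| comap_le_normalizer_comap _ (map_le_normalizer_map _ h)

variable {B}

theorem map_fst_N (hB : B.map (MonoidHom.fst S S) = ⊤) (U : Subgroup (S × S)) :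
    (N B U).map (MonoidHom.fst S S) = U.map (MonoidHom.snd S S) :=
  map_inf_comap_of_le_map _ (hB ▸ le_top)

theorem X_inf_P_N (hB : B.map (MonoidHom.fst S S) = ⊤) {j : ℤ} {K : Subgroup (S × S)}
    (hKX : K ≤ X B j) (hYK : X B j ⊓ Y B 0 ≤ K) : X B j ⊓ P B (N B K) = K := by
  rw [P, map_fst_N hB, ← inf_assoc, inf_eq_left.mpr (X_le B j)]
  exact inf_comap_map_eq_of_inf_ker_le _ hKX (X_inf_Y_zero B j ▸ hYK)

end

theorem next_branch_le_iff_and_normal_iff_general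
    (B : Subgroup (S × S))
    (hB1 : Subgroup.map (MonoidHom.fst S S) B = ⊤)
    (j : ℤ)
    (J H : Subgroup (S × S)) (hJX : J ≤ X B j) (hHX : H ≤ X B j)
    (hYJ : X B j ⊓ Y B 0 ≤ J) (hYH : X B j ⊓ Y B 0 ≤ H) :
    (J ≤ H ↔ N B J ≤ N B H) ∧
    ((J ≤ H ∧ (J.subgroupOf H).Normal) ↔
      (N B J ≤ N B H ∧ ((N B J).subgroupOf (N B H)).Normal)) := by
  have hJ := X_inf_P_N hB1 hJX hYJ
  have hH := X_inf_P_N hB1 hHX hYH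
  have le_of_N_le : N B J ≤ N B H → J ≤ H := fun h => by
    simpa only [hJ, hH] using inf_le_inf_left (X B j) (P_mono B h)
  refine ⟨⟨fun h => N_mono B h, le_of_N_le⟩, ?_⟩
  rw [Subgroup.le_and_normal_subgroupOf_iff, Subgroup.le_and_normal_subgroupOf_iff]
  refine ⟨fun ⟨hle, hn⟩ => ⟨N_mono B hle, N_le_normalizer_N B hn⟩,
    fun ⟨hle, hn⟩ => ⟨le_of_N_le hle, ?_⟩⟩
  simpa only [hJ, hH] using Subgroup.inf_le_normalizer_inf (X B j) (P_le_normalizer_P B hn)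

/-- for subgroups `J, H ≤ X_j` both containing `X_j ∩ Y₀`:
`J ≤ H` iff `N(J) ≤ N(H)`, and `J ⊴ H` iff `N(J) ⊴ N(H)`. -/
theorem next_branch_le_iff_and_normal_iff
    (B : Subgroup (S × S))
    (hB1 : Subgroup.map (MonoidHom.fst S S) B = ⊤)
    (hB2 : Subgroup.map (MonoidHom.snd S S) B = ⊤)
    (j : ℤ) (hj : 0 ≤ j)
    (J H : Subgroup (S × S)) (hJX : J ≤ X B j) (hHX : H ≤ X B j)
    (hYJ : X B j ⊓ Y B 0 ≤ J) (hYH : X B j ⊓ Y B 0 ≤ H) :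
    (J ≤ H ↔ N B J ≤ N B H) ∧
    ((J ≤ H ∧ (J.subgroupOf H).Normal) ↔
      (N B J ≤ N B H ∧ ((N B J).subgroupOf (N B H)).Normal)) :=
  next_branch_le_iff_and_normal_iff_general B hB1 j J H hJX hHX hYJ hYH

end GroupCodes
end

section
/- Let c and c' be trellis paths and suppose c t = c' t for some t ∈ ℤ. Then for every integer j ≥ 1, c' (t+j) lies in the coset X_{j-1} · (c (t+j)) of the normal subgroup X_{j-1} of B; and c' (t−1) lies in the coset Y₀ · (c (t−1)) of the normal subgroup Y₀ of B. -/
open Pointwise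

namespace GroupCodes

variable {S : Type*} [Group S]

section Membership

variable {B : Subgroup (S × S)}

theorem mem_Xnat_zero {b : S × S} (hb : b ∈ B) (h : b.1 = 1) : b ∈ Xnat B 0 :=
  ⟨hb, h⟩

theorem mem_Xnat_succ {n : ℕ} {a b : S × S} (ha : a ∈ Xnat B n) (hb : b ∈ B) (h : a.2 = b.1) :
    b ∈ Xnat B (n + 1) :=
  ⟨hb, a, ha, h⟩

theorem mem_Ynat_zero {b : S × S} (hb : b ∈ B) (h : b.2 = 1) : b ∈ Ynat B 0 :=
  ⟨hb, h⟩

theorem X_of_nonneg {i : ℤ} (hi : 0 ≤ i) : X B i = Xnat B i.toNat :=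
  if_neg hi.not_gt

end Membership

section Paths

variable {B : Subgroup (S × S)} {d : ℤ → S × S}

theorem mem_Xnat_of_snd_eq_one (hd : ∀ t, d t ∈ B) (hpath : ∀ t, (d t).2 = (d (t + 1)).1)
    {t : ℤ} (ht : (d t).2 = 1) (n : ℕ) : d (t + n + 1) ∈ Xnat B n := by
  induction n with
  | zero => exact mem_Xnat_zero (hd _) (by simpa [← hpath t])
  | succ n ih =>
    refine mem_Xnat_succ ih (hd _) ?_
    rw [hpath]
    congr 3
    push_cast
    ring

theorem mem_X_of_snd_eq_one (hd : ∀ t, d t ∈ B) (hpath : ∀ t, (d t).2 = (d (t + 1)).1)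
    {t : ℤ} (ht : (d t).2 = 1) {j : ℤ} (hj : 1 ≤ j) : d (t + j) ∈ X B (j - 1) := by
  rw [X_of_nonneg (by omega)]
  have h := mem_Xnat_of_snd_eq_one hd hpath ht (j - 1).toNat
  rwa [show t + ((j - 1).toNat : ℤ) + 1 = t + j by omega] at h

theorem mem_Y_zero_of_fst_eq_one (hd : ∀ t, d t ∈ B) (hpath : ∀ t, (d t).2 = (d (t + 1)).1)
    {t : ℤ} (ht : (d t).1 = 1) : d (t - 1) ∈ Y B 0 :=
  mem_Ynat_zero (hd _) (by rw [hpath, sub_add_cancel, ht])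

end Paths

theorem mem_mul_singleton_of_mul_inv_mem {G : Type*} [Group G] {s : Set G} {a b : G}
    (h : a * b⁻¹ ∈ s) : a ∈ s * {b} :=
  ⟨_, h, b, rfl, inv_mul_cancel_right a b⟩

theorem estimation_cosets_general
    (B : Subgroup (S × S))
    (c c' : ℤ → S × S)
    (hc : ∀ t : ℤ, c t ∈ B) (hc' : ∀ t : ℤ, c' t ∈ B)
    (hpath : ∀ t : ℤ, (c t).2 = (c (t + 1)).1)
    (hpath' : ∀ t : ℤ, (c' t).2 = (c' (t + 1)).1)
    (t : ℤ) (ht : c t = c' t) :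
    (∀ j : ℤ, 1 ≤ j →
      c' (t + j) ∈ (↑(X B (j - 1)) : Set (S × S)) * {c (t + j)}) ∧
    c' (t - 1) ∈ (↑(Y B 0) : Set (S × S)) * {c (t - 1)} := by
  -- The branchwise quotient of two trellis paths is again a trellis path, passing through `1`.
  set d : ℤ → S × S := fun s => c' s * (c s)⁻¹
  have hd : ∀ s, d s ∈ B := fun s => mul_mem (hc' s) (inv_mem (hc s))
  have hpath_d : ∀ s, (d s).2 = (d (s + 1)).1 := fun s => by
    simp only [d, Prod.snd_mul, Prod.snd_inv, Prod.fst_mul, Prod.fst_inv, hpath, hpath']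
  have hdt : d t = 1 := by simp only [d, ht, mul_inv_cancel]
  exact ⟨fun j hj => mem_mul_singleton_of_mul_inv_mem <|
      mem_X_of_snd_eq_one hd hpath_d (by rw [hdt]; rfl) hj,
    mem_mul_singleton_of_mul_inv_mem <| mem_Y_zero_of_fst_eq_one hd hpath_d (by rw [hdt]; rfl)⟩

/-- if two trellis paths agree at time `t`, then for `j ≥ 1` their branches
at time `t + j` lie in the same coset of `X_{j-1}`, and at time `t - 1` in the same coset
of `Y₀`. -/
theorem estimation_cosets
    (B : Subgroup (S × S))
    (hB1 : Subgroup.map (MonoidHom.fst S S) B = ⊤)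
    (hB2 : Subgroup.map (MonoidHom.snd S S) B = ⊤)
    (c c' : ℤ → S × S)
    (hc : ∀ t : ℤ, c t ∈ B) (hc' : ∀ t : ℤ, c' t ∈ B)
    (hpath : ∀ t : ℤ, (c t).2 = (c (t + 1)).1)
    (hpath' : ∀ t : ℤ, (c' t).2 = (c' (t + 1)).1)
    (t : ℤ) (ht : c t = c' t) :
    (∀ j : ℤ, 1 ≤ j →
      c' (t + j) ∈ (↑(X B (j - 1)) : Set (S × S)) * {c (t + j)}) ∧
    c' (t - 1) ∈ (↑(Y B 0) : Set (S × S)) * {c (t - 1)} :=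
  estimation_cosets_general B c c' hc hc' hpath hpath' t ht

end GroupCodes
end

section
/- For every integer i, the subgroups X_i and Y_i are normal subgroups of B. -/
open Pointwise

namespace GroupCodes

variable {S : Type*} [Group S]

open Subgroup

section Normalizer

variable {G H : Type*} [Group G] [Group H]

theorem _root_.Subgroup.le_normalizer_inf_of_normal (B : Subgroup G) {K : Subgroup G}
    [K.Normal] : B ≤ normalizer (B ⊓ K : Subgroup G) :=
  (le_inf B.le_normalizer le_normalizer_of_normal).trans inf_normalizer_le_normalizer_inf

theorem _root_.Subgroup.normal_map_of_le_normalizer {B U : Subgroup G} {f : G →* H}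
    (hf : B.map f = ⊤) (hU : B ≤ normalizer (U : Set G)) : (U.map f).Normal :=
  normalizer_eq_top_iff.mp <| top_le_iff.mp <| hf ▸ (map_mono hU).trans (le_normalizer_map f)

end Normalizer

-- `N B U` is cut out of `B` by the preimage of `U⁺`, which is normal in `S = B⁺`.
theorem le_normalizer_N {B U : Subgroup (S × S)}
    (hB2 : B.map (MonoidHom.snd S S) = ⊤) (hU : B ≤ normalizer (U : Set (S × S))) :
    B ≤ normalizer (N B U : Set (S × S)) :=
  have := (normal_map_of_le_normalizer hB2 hU).comap (MonoidHom.fst S S)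
  B.le_normalizer_inf_of_normal

theorem le_normalizer_P {B U : Subgroup (S × S)}
    (hB1 : B.map (MonoidHom.fst S S) = ⊤) (hU : B ≤ normalizer (U : Set (S × S))) :
    B ≤ normalizer (P B U : Set (S × S)) :=
  have := (normal_map_of_le_normalizer hB1 hU).comap (MonoidHom.snd S S)
  B.le_normalizer_inf_of_normal

theorem Xnat_le (B : Subgroup (S × S)) : ∀ n, Xnat B n ≤ B
  | 0 | _ + 1 => inf_le_left

theorem Ynat_le (B : Subgroup (S × S)) : ∀ n, Ynat B n ≤ B
  | 0 | _ + 1 => inf_le_left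

theorem le_normalizer_Xnat {B : Subgroup (S × S)} (hB2 : B.map (MonoidHom.snd S S) = ⊤) :
    ∀ n, B ≤ normalizer (Xnat B n : Set (S × S))
  | 0 => B.le_normalizer_inf_of_normal
  | n + 1 => le_normalizer_N hB2 (le_normalizer_Xnat hB2 n)

theorem le_normalizer_Ynat {B : Subgroup (S × S)} (hB1 : B.map (MonoidHom.fst S S) = ⊤) :
    ∀ n, B ≤ normalizer (Ynat B n : Set (S × S))
  | 0 => B.le_normalizer_inf_of_normal
  | n + 1 => le_normalizer_P hB1 (le_normalizer_Ynat hB1 n)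

theorem X_le_and_normal {B : Subgroup (S × S)} (hB2 : B.map (MonoidHom.snd S S) = ⊤) (i : ℤ) :
    X B i ≤ B ∧ ((X B i).subgroupOf B).Normal := by
  have key : X B i ≤ B ∧ B ≤ normalizer (X B i : Set (S × S)) := by
    unfold X
    split_ifs
    · exact ⟨bot_le, le_normalizer_of_normal⟩
    · exact ⟨Xnat_le B _, le_normalizer_Xnat hB2 _⟩
  exact ⟨key.1, (normal_subgroupOf_iff_le_normalizer key.1).mpr key.2⟩

theorem Y_le_and_normal {B : Subgroup (S × S)} (hB1 : B.map (MonoidHom.fst S S) = ⊤) (i : ℤ) :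
    Y B i ≤ B ∧ ((Y B i).subgroupOf B).Normal := by
  have key : Y B i ≤ B ∧ B ≤ normalizer (Y B i : Set (S × S)) := by
    unfold Y
    split_ifs
    · exact ⟨bot_le, le_normalizer_of_normal⟩
    · exact ⟨Ynat_le B _, le_normalizer_Ynat hB1 _⟩
  exact ⟨key.1, (normal_subgroupOf_iff_le_normalizer key.1).mpr key.2⟩

/-- for every integer `i`, `X_i` and `Y_i` are normal subgroups of `B`. -/
theorem X_Y_normal_in_B
    (B : Subgroup (S × S))
    (hB1 : Subgroup.map (MonoidHom.fst S S) B = ⊤)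
    (hB2 : Subgroup.map (MonoidHom.snd S S) B = ⊤) :
    ∀ i : ℤ,
      X B i ≤ B ∧ ((X B i).subgroupOf B).Normal ∧
      Y B i ≤ B ∧ ((Y B i).subgroupOf B).Normal :=
  fun i => ⟨(X_le_and_normal hB2 i).1, (X_le_and_normal hB2 i).2,
    (Y_le_and_normal hB1 i).1, (Y_le_and_normal hB1 i).2⟩

end GroupCodes
end
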